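/- Let Q be a 2×2 matrix potential with Q₁₁ = Q₂₂ = 0 and Q₁₂ = ±Q₂₁ ∈ L^p(ℝ²), p > 2, compactly supported, and let k ∉ ℰ. Then the unique solution μ of the integral equation μ(z,k) = I + (1/π)∫_{ℝ²} (e^{−Re(ik̄z')}/(z−z')) Q(z') μ̄(z',k) dz'_R dz'_I satisfies μ₁₁ = μ₂₂ and μ₁₂ = ±μ₂₁. -/

import Mathlib

open MeasureTheory Complex Filter Metric Set

noncomputable section

attribute [local instance] Matrix.normedAddCommGroup Matrix.normedSpace

/-- 2×2 complex matrices. -/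
abbrev M2 : Type := Matrix (Fin 2) (Fin 2) ℂ

/-- Off-diagonal part of a 2×2 matrix. -/
def PiO (M : M2) : M2 := Matrix.of fun i j => if i = j then 0 else M i j

/-- Diagonal part of a 2×2 matrix. -/
def PiD (M : M2) : M2 := Matrix.of fun i j => if i = j then M i j else 0

/-- Entrywise complex conjugation of a 2×2 matrix. -/
def matConj (M : M2) : M2 := Matrix.of fun i j => (starRingEnd ℂ) (M i j)

/-- The exterior `ℂ ∖ D` of the disk `D` of radius `A`. -/
def extD (A : ℝ) : Set ℂ := {ς : ℂ | A ≤ ‖ς‖}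

/-- Parametrization of the circle `∂D` of radius `A`. -/
def circ (A : ℝ) (θ : ℝ) : ℂ := (A : ℂ) * Complex.exp (θ * Complex.I)

/-- Membership in the space `ℋ^s`: entries in `L^s(ℝ²)` and continuous
on the closed disk of radius `A`. -/
def memHs (s A : ℝ) (φ : ℂ → M2) : Prop :=
  MemLp φ (ENNReal.ofReal s) (volume : Measure ℂ) ∧
  ContinuousOn φ (closedBall (0 : ℂ) A)

/-- The norm of `ℋ^s`. -/
def HsNorm (s A : ℝ) (φ : ℂ → M2) : ℝ :=
  (eLpNorm φ (ENNReal.ofReal s) (volume : Measure ℂ)).toReal +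
  ⨆ k : closedBall (0 : ℂ) A, ‖φ (k : ℂ)‖

/-- The operator norm of a map on `ℋ^s`. -/
def opNormHs (s A : ℝ) (T : (ℂ → M2) → ℂ → M2) : ℝ :=
  ⨆ φ : {φ : ℂ → M2 // memHs s A φ ∧ HsNorm s A φ ≤ 1}, HsNorm s A (T φ.1)

/-- Compactness of an operator on `ℋ^s`: any bounded sequence in `ℋ^s` has a
subsequence whose image converges in the `ℋ^s` norm to an element of `ℋ^s`. -/
def IsCompactOnHs (s A : ℝ) (T : (ℂ → M2) → ℂ → M2) : Prop :=
  ∀ φ : ℕ → ℂ → M2, (∀ n, memHs s A (φ n)) → (∃ M, ∀ n, HsNorm s A (φ n) ≤ M) →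
    ∃ (g : ℂ → M2) (σ : ℕ → ℕ), StrictMono σ ∧ memHs s A g ∧
      Tendsto (fun n => HsNorm s A (fun k => T (φ (σ n)) k - g k)) atTop (nhds 0)

/-- The integrand of the boundary (`∂D × ∂D`) part of the operators `T_z` and `𝒞`:
`e^{i(ς z̄ + ς̄' z)/2} φ̄⁻(ς') Π°[w h dς̄'] + e^{i(ς−ς') z̄/2} φ⁻(ς') Π^d 𝐂[w h dς̄']`,
written in the parametrization `ς = circ A θ`, `ς' = circ A θ'` (so that
`dς̄' = conj (i A e^{iθ'}) dθ'`), with the matrix factor `φ` on the left. -/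
def bKer (A : ℝ) (h : ℂ → ℂ → M2) (w : ℂ → ℂ → ℂ) (z : ℂ) (φ : ℂ → M2) (θ θ' : ℝ) : M2 :=
  ((starRingEnd ℂ) (Complex.I * (A : ℂ) * Complex.exp (θ' * Complex.I))) •
    (Complex.exp (Complex.I * (circ A θ * (starRingEnd ℂ) z + (starRingEnd ℂ) (circ A θ') * z) / 2) •
      (matConj (φ (circ A θ')) * PiO (w (circ A θ') (circ A θ) • h (circ A θ') (circ A θ))))
  + (Complex.I * (A : ℂ) * Complex.exp (θ' * Complex.I)) •
    (Complex.exp (Complex.I * (circ A θ - circ A θ') * (starRingEnd ℂ) z / 2) •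
      (φ (circ A θ') * matConj (PiD (w (circ A θ') (circ A θ) • h (circ A θ') (circ A θ)))))

/-- The part `𝔐` of the operator `T_z`, integrating over `ℂ ∖ D`. -/
def Mpart (A : ℝ) (h : ℂ → ℂ → M2) (z : ℂ) (φ : ℂ → M2) (k : ℂ) : M2 :=
  ((Real.pi : ℂ))⁻¹ •
    ∫ ς in extD A,
      ((ς - k)⁻¹ * Complex.exp (Complex.I * ((starRingEnd ℂ) ς * z + (starRingEnd ℂ) z * ς) / 2)) •
        (matConj (φ ς) * PiO (h ς ς))

/-- The part `𝔇 = 𝔇° + 𝔇^d` of the operator `T_z`, integrating over `∂D × ∂D`. -/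
def Dpart (A : ℝ) (h : ℂ → ℂ → M2) (w : ℂ → ℂ → ℂ) (z : ℂ) (φ : ℂ → M2) (k : ℂ) : M2 :=
  (2 * (Real.pi : ℂ) * Complex.I)⁻¹ •
    ∫ θ in (0:ℝ)..(2 * Real.pi),
      (Complex.I * (A : ℂ) * Complex.exp (θ * Complex.I) * (circ A θ - k)⁻¹) •
        ∫ θ' in (0:ℝ)..(2 * Real.pi), bKer A h w z φ θ θ'

/-- The operator `T_z` of the global Riemann–Hilbert problem. -/
def TzOp (A : ℝ) (h : ℂ → ℂ → M2) (w : ℂ → ℂ → ℂ) (z : ℂ) (φ : ℂ → M2) : ℂ → M2 :=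
  fun k => Mpart A h z φ k + Dpart A h w z φ k

/-- The part `𝒞¹` of `𝒞`, integrating over `ℂ ∖ D`. -/
def C1part (A : ℝ) (h : ℂ → ℂ → M2) (z : ℂ) (φ : ℂ → M2) : M2 :=
  ((Real.pi : ℂ))⁻¹ •
    ∫ ς in extD A,
      Complex.exp (Complex.I * ((starRingEnd ℂ) ς * z + (starRingEnd ℂ) z * ς) / 2) •
        (matConj (φ ς) * PiO (h ς ς))

/-- The boundary part `𝒞° + 𝒞^d` of `𝒞`, integrating over `∂D × ∂D`. -/
def CDpartFull (A : ℝ) (h : ℂ → ℂ → M2) (w : ℂ → ℂ → ℂ) (z : ℂ) (φ : ℂ → M2) : M2 :=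
  (2 * (Real.pi : ℂ) * Complex.I)⁻¹ •
    ∫ θ in (0:ℝ)..(2 * Real.pi),
      (Complex.I * (A : ℂ) * Complex.exp (θ * Complex.I)) •
        ∫ θ' in (0:ℝ)..(2 * Real.pi), bKer A h w z φ θ θ'

/-- The functional `𝒞` (the operator `T_z` without the Cauchy kernel `1/(ς−k)`). -/
def CzOp (A : ℝ) (h : ℂ → ℂ → M2) (w : ℂ → ℂ → ℂ) (z : ℂ) (φ : ℂ → M2) : M2 :=
  C1part A h z φ + CDpartFull A h w z φ

/-- Basic condition (2602A, part 1) on the data `h`: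
`Π°h(ς,ς) ∈ L^∞(ℂ∖D) ∩ L²(ℂ∖D)` and `h ∈ L^∞(∂D×∂D)`. -/
def CondBasic (A : ℝ) (h : ℂ → ℂ → M2) : Prop :=
  MemLp (fun ς => PiO (h ς ς)) ⊤ ((volume : Measure ℂ).restrict (extD A)) ∧
  MemLp (fun ς => PiO (h ς ς)) 2 ((volume : Measure ℂ).restrict (extD A)) ∧
  ∃ M : ℝ, ∀ ς' ∈ sphere (0 : ℂ) A, ∀ ς ∈ sphere (0 : ℂ) A, ‖h ς' ς‖ ≤ M

/-- Strong condition (strh) on the data `h`: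
`|ς|³ Π°h(ς,ς) ∈ L^∞(ℂ∖D) ∩ L¹(ℂ∖D)` and `h ∈ L^∞(∂D×∂D)`. -/
def CondStrong (A : ℝ) (h : ℂ → ℂ → M2) : Prop :=
  MemLp (fun ς => (‖ς‖ ^ 3 : ℝ) • PiO (h ς ς)) ⊤
    ((volume : Measure ℂ).restrict (extD A)) ∧
  MemLp (fun ς => (‖ς‖ ^ 3 : ℝ) • PiO (h ς ς)) 1
    ((volume : Measure ℂ).restrict (extD A)) ∧
  ∃ M : ℝ, ∀ ς' ∈ sphere (0 : ℂ) A, ∀ ς ∈ sphere (0 : ℂ) A, ‖h ς' ς‖ ≤ M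

/-- Logarithmic bound (2602A, part 2) on the weight `w`:
`|w(ς',ς)| ≤ C |log |ς−ς'||` on `∂D × ∂D`. -/
def CondLog (A C : ℝ) (w : ℂ → ℂ → ℂ) : Prop :=
  ∀ ς' ∈ sphere (0 : ℂ) A, ∀ ς ∈ sphere (0 : ℂ) A,
    ‖w ς' ς‖ ≤ C * |Real.log ‖ς - ς'‖|

/-- The norm `‖h‖_H`. -/
def normH (A : ℝ) (h : ℂ → ℂ → M2) : ℝ :=
  (eLpNorm (fun ς => PiO (h ς ς)) ⊤ ((volume : Measure ℂ).restrict (extD A))).toReal +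
  (eLpNorm (fun ς => PiO (h ς ς)) 2 ((volume : Measure ℂ).restrict (extD A))).toReal +
  ⨆ p : sphere (0 : ℂ) A × sphere (0 : ℂ) A, ‖h (p.1 : ℂ) (p.2 : ℂ)‖

/-- The symmetry condition `h₁₁ = h₂₂`, `h₁₂ = ± h₂₁` (sign `ε`), on the diagonal in
`ℂ ∖ D` and on `∂D × ∂D`. -/
def SymCond (A : ℝ) (ε : ℂ) (h : ℂ → ℂ → M2) : Prop :=
  (∀ k ∈ extD A, h k k 0 0 = h k k 1 1 ∧ h k k 0 1 = ε * h k k 1 0) ∧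
  (∀ ς' ∈ sphere (0 : ℂ) A, ∀ ς ∈ sphere (0 : ℂ) A,
    h ς' ς 0 0 = h ς' ς 1 1 ∧ h ς' ς 0 1 = ε * h ς' ς 1 0)

/-- The time evolution `h(ς',ς,t)` of time-independent scattering data `h`. -/
def hT (h : ℂ → ℂ → M2) (t : ℝ) (ς' ς : ℂ) : M2 :=
  Complex.exp (-(t : ℂ) * (ς ^ 2 - ((starRingEnd ℂ) ς') ^ 2) / 2) • PiO (h ς' ς)
  + Complex.exp (-(t : ℂ) * (((starRingEnd ℂ) ς) ^ 2 - ((starRingEnd ℂ) ς') ^ 2) / 2) •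
      PiD (h ς' ς)

/-- The logarithmic weight `Ln((ς̄' − ς̄)/(ς̄' − k̄₀))`. -/
def wLn (k0 : ℂ) (ς' ς : ℂ) : ℂ :=
  Complex.log (((starRingEnd ℂ) ς' - (starRingEnd ℂ) ς) / ((starRingEnd ℂ) ς' - (starRingEnd ℂ) k0))

/-- The Wirtinger derivative `∂̄ = ½(∂_x + i ∂_y)`. -/
def wbar {E : Type} [NormedAddCommGroup E] [NormedSpace ℝ E] [Module ℂ E] (f : ℂ → E) (z : ℂ) : E :=
  (2 : ℂ)⁻¹ • (fderiv ℝ f z 1 + Complex.I • fderiv ℝ f z Complex.I)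

/-- The Wirtinger derivative `∂ = ½(∂_x − i ∂_y)`. -/
def wd {E : Type} [NormedAddCommGroup E] [NormedSpace ℝ E] [Module ℂ E] (f : ℂ → E) (z : ℂ) : E :=
  (2 : ℂ)⁻¹ • (fderiv ℝ f z 1 - Complex.I • fderiv ℝ f z Complex.I)

/-- The off-diagonal matrix potential `Q⁰` built from `q₀` with sign `ε`. -/
def Q0 (ε : ℂ) (q0 : ℂ → ℂ) : ℂ → M2 :=
  fun z => Matrix.of fun i j =>
    if i = j then 0 else if (i : ℕ) = 0 then q0 z else ε * q0 z

/-- `k` is an exceptional point of the potential `Q`: the homogeneous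
Lippmann–Schwinger equation has a nontrivial solution in some `L^q`, `q > 2`. -/
def Exceptional (Q : ℂ → M2) (k : ℂ) : Prop :=
  ∃ μ : ℂ → M2, μ ≠ 0 ∧ (∃ q : ℝ, 2 < q ∧ MemLp μ (ENNReal.ofReal q) (volume : Measure ℂ)) ∧
    ∀ z : ℂ, μ z = ∫ z' : ℂ,
      (((Real.pi : ℂ) * (z - z'))⁻¹ *
        Complex.exp (-(((Complex.I * (starRingEnd ℂ) k * z').re : ℝ) : ℂ))) •
        (Q z' * matConj (μ z'))

/-- `ψ` is the family of scattering solutions of the Lippmann–Schwinger equation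
for the potential `Q` (for non-exceptional `k`). -/
def IsScatteringSol (Q : ℂ → M2) (ψ : ℂ → ℂ → M2) : Prop :=
  (∀ k : ℂ, ¬ Exceptional Q k → ∀ z : ℂ,
    ψ z k = Complex.exp (Complex.I * (starRingEnd ℂ) k * z / 2) • (1 : M2) +
      ∫ z' : ℂ, (((Real.pi : ℂ) * (z - z'))⁻¹ *
          Complex.exp (Complex.I * (starRingEnd ℂ) k * (z - z') / 2)) •
        (Q z' * matConj (ψ z' k))) ∧
  ∀ k : ℂ, ¬ Exceptional Q k → ∃ q : ℝ, 2 < q ∧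
    MemLp (fun z => Complex.exp (-(Complex.I * (starRingEnd ℂ) k * z) / 2) • ψ z k - (1 : M2))
      (ENNReal.ofReal q) (volume : Measure ℂ)

/-- The generalized scattering data `h₀(ς,k)` built from the potential `Q`
and its scattering solutions `ψ`. -/
def scatData (Q : ℂ → M2) (ψ : ℂ → ℂ → M2) (ς k : ℂ) : M2 :=
  (((2 * Real.pi) ^ 2 : ℂ))⁻¹ •
    ∫ z : ℂ, Complex.exp (-(Complex.I * (starRingEnd ℂ) ς * z) / 2) • (Q z * matConj (ψ z k))

/-- The off-diagonal (`Π°`) term of the boundary integrand. -/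
def bKerO (A : ℝ) (h : ℂ → ℂ → M2) (w : ℂ → ℂ → ℂ) (z : ℂ) (φ : ℂ → M2) (θ θ' : ℝ) : M2 :=
  ((starRingEnd ℂ) (Complex.I * (A : ℂ) * Complex.exp (θ' * Complex.I))) •
    (Complex.exp (Complex.I * (circ A θ * (starRingEnd ℂ) z + (starRingEnd ℂ) (circ A θ') * z) / 2) •
      (matConj (φ (circ A θ')) * PiO (w (circ A θ') (circ A θ) • h (circ A θ') (circ A θ))))

/-- The diagonal (`Π^d 𝐂`) term of the boundary integrand. -/
def bKerD (A : ℝ) (h : ℂ → ℂ → M2) (w : ℂ → ℂ → ℂ) (z : ℂ) (φ : ℂ → M2) (θ θ' : ℝ) : M2 :=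
  (Complex.I * (A : ℂ) * Complex.exp (θ' * Complex.I)) •
    (Complex.exp (Complex.I * (circ A θ - circ A θ') * (starRingEnd ℂ) z / 2) •
      (φ (circ A θ') * matConj (PiD (w (circ A θ') (circ A θ) • h (circ A θ') (circ A θ)))))

/-- The part `𝔇°` of `T_z` (boundary part containing `Π°`). -/
def DOpart (A : ℝ) (h : ℂ → ℂ → M2) (w : ℂ → ℂ → ℂ) (z : ℂ) (φ : ℂ → M2) (k : ℂ) : M2 :=
  (2 * (Real.pi : ℂ) * Complex.I)⁻¹ •
    ∫ θ in (0:ℝ)..(2 * Real.pi),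
      (Complex.I * (A : ℂ) * Complex.exp (θ * Complex.I) * (circ A θ - k)⁻¹) •
        ∫ θ' in (0:ℝ)..(2 * Real.pi), bKerO A h w z φ θ θ'

/-- The part `𝔇^d` of `T_z` (boundary part containing `Π^d 𝐂`). -/
def DDpart (A : ℝ) (h : ℂ → ℂ → M2) (w : ℂ → ℂ → ℂ) (z : ℂ) (φ : ℂ → M2) (k : ℂ) : M2 :=
  (2 * (Real.pi : ℂ) * Complex.I)⁻¹ •
    ∫ θ in (0:ℝ)..(2 * Real.pi),
      (Complex.I * (A : ℂ) * Complex.exp (θ * Complex.I) * (circ A θ - k)⁻¹) •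
        ∫ θ' in (0:ℝ)..(2 * Real.pi), bKerD A h w z φ θ θ'

/-- The part `𝒞°` of `𝒞` (boundary part containing `Π°`). -/
def COpart (A : ℝ) (h : ℂ → ℂ → M2) (w : ℂ → ℂ → ℂ) (z : ℂ) (φ : ℂ → M2) : M2 :=
  (2 * (Real.pi : ℂ) * Complex.I)⁻¹ •
    ∫ θ in (0:ℝ)..(2 * Real.pi),
      (Complex.I * (A : ℂ) * Complex.exp (θ * Complex.I)) •
        ∫ θ' in (0:ℝ)..(2 * Real.pi), bKerO A h w z φ θ θ'

/-- The part `𝒞^d` of `𝒞` (boundary part containing `Π^d 𝐂`). -/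
def CDpart (A : ℝ) (h : ℂ → ℂ → M2) (w : ℂ → ℂ → ℂ) (z : ℂ) (φ : ℂ → M2) : M2 :=
  (2 * (Real.pi : ℂ) * Complex.I)⁻¹ •
    ∫ θ in (0:ℝ)..(2 * Real.pi),
      (Complex.I * (A : ℂ) * Complex.exp (θ * Complex.I)) •
        ∫ θ' in (0:ℝ)..(2 * Real.pi), bKerD A h w z φ θ θ'

/-- The kernel of `I + T_z` in `ℋ^s` is trivial. -/
def KernelTrivial (s A : ℝ) (h : ℂ → ℂ → M2) (w : ℂ → ℂ → ℂ) (z : ℂ) : Prop :=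
  ∀ φ : ℂ → M2, memHs s A φ → (∀ k, φ k + TzOp A h w z φ k = 0) → ∀ k, φ k = 0

/-- `v` solves `(I + T_z) v = I` with `v − I ∈ ℋ^s`. -/
def SolvesRH (s A : ℝ) (h : ℂ → ℂ → M2) (w : ℂ → ℂ → ℂ) (z : ℂ) (v : ℂ → M2) : Prop :=
  memHs s A (fun k => v k - 1) ∧ ∀ k, v k + TzOp A h w z v k = 1

/-- The function `ψ := Π^d v̄ e^{i k̄ z/2} + e^{−i z̄ k/2} Π° v`. -/
def psiFun (v : ℂ → ℂ → M2) (z k : ℂ) : M2 :=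
  Complex.exp (Complex.I * (starRingEnd ℂ) k * z / 2) • PiD (matConj (v z k)) +
  Complex.exp (-(Complex.I * (starRingEnd ℂ) z * k) / 2) • PiO (v z k)

/-- The function `q(z,t) = (1/(2i)) (Π° 𝒞_{z,t} v)₁₂` for a time-dependent family of data. -/
def qFunT (A : ℝ) (k0 : ℂ) (hfam : ℝ → ℂ → ℂ → M2) (v : ℂ → ℝ → ℂ → M2) (z : ℂ) (t : ℝ) : ℂ :=
  (2 * Complex.I)⁻¹ * (PiO (CzOp A (hfam t) (wLn k0) z (v z t))) 0 1

/-- The function `φ(z,t)`, the diagonal entry of `(1/(2i)) ∂̄ Π^d 𝒞_{z,t} v`. -/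
def phiFunT (A : ℝ) (k0 : ℂ) (hfam : ℝ → ℂ → ℂ → M2) (v : ℂ → ℝ → ℂ → M2) (z : ℂ) (t : ℝ) : ℂ :=
  (2 * Complex.I)⁻¹ * (wbar (fun ζ => PiD (CzOp A (hfam t) (wLn k0) ζ (v ζ t))) z) 0 0

/-- The matrix `A(z,t)` with `A₁₂ = ±A₂₁ = −4 ∂̄q` and `A₁₁ = A₂₂ = ∓4φ` (sign `ε`). -/
def AmatT (ε : ℂ) (A : ℝ) (k0 : ℂ) (hfam : ℝ → ℂ → ℂ → M2) (v : ℂ → ℝ → ℂ → M2)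
    (z : ℂ) (t : ℝ) : M2 :=
  Matrix.of fun i j =>
    if i = j then -ε * 4 * phiFunT A k0 hfam v z t
    else if (i : ℕ) = 0 then -4 * wbar (fun ζ => qFunT A k0 hfam v ζ t) z
    else ε * (-4 * wbar (fun ζ => qFunT A k0 hfam v ζ t) z)

/-- The compatibility condition
`v_t + 2(v_z̄z̄ + v_zz) − 2ik v_z̄ + A (Π^d v) + Ā (Π° v) = 0`. -/
def CompatCond (ε : ℂ) (A : ℝ) (k0 : ℂ) (hfam : ℝ → ℂ → ℂ → M2) (v : ℂ → ℝ → ℂ → M2)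
    (z : ℂ) (t : ℝ) : Prop :=
  ∀ k : ℂ,
    deriv (fun τ => v z τ k) t
    + (2 : ℂ) • (wbar (fun ζ => wbar (fun ξ => v ξ t k) ζ) z
        + wd (fun ζ => wd (fun ξ => v ξ t k) ζ) z)
    - (2 * Complex.I * k) • wbar (fun ζ => v ζ t k) z
    + AmatT ε A k0 hfam v z t * PiD (v z t k)
    + matConj (AmatT ε A k0 hfam v z t) * PiO (v z t k) = 0

/-- Iterated spatial derivatives (in `Re z`, `Im z`) of an operator family,
obtained by differentiating pointwise (i.e. under the integral sign);
`true` codes a `∂_x` derivative and `false` a `∂_y` derivative. -/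
def famD : List Bool → (ℂ → ℝ → (ℂ → M2) → ℂ → M2) → ℂ → ℝ → (ℂ → M2) → ℂ → M2
  | [], F => F
  | b :: l, F => fun z t φ k =>
      fderiv ℝ (fun ζ => famD l F ζ t φ k) z (if b then 1 else Complex.I)

/-- The (one-sided at `t = 0`) time derivative of an operator family, obtained by
differentiating pointwise (i.e. under the integral sign). -/
def timeD (F : ℂ → ℝ → (ℂ → M2) → ℂ → M2) : ℂ → ℝ → (ℂ → M2) → ℂ → M2 :=
  fun z t φ k => derivWithin (fun τ => F z τ φ k) (Ici (0:ℝ)) t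

/-- The class `W^{n,∞}_comp`: functions with `n` bounded derivatives supported in `O`. -/
def Wcomp (n : ℕ) (O : Set ℂ) : Set (ℂ → ℂ) :=
  {f | ContDiff ℝ n f ∧ tsupport f ⊆ O}

/-- The `W^{n,∞}` distance. -/
def WcompDist (n : ℕ) (f g : ℂ → ℂ) : ℝ :=
  ∑ j ∈ Finset.range (n + 1), ⨆ z : ℂ, ‖iteratedFDeriv ℝ j (fun u => f u - g u) z‖

/-! Conjugation `S M = J * M * Jᵀ` by `J = !![0, 1; ε, 0]` fixes `1` and, `ε` being real,
commutes with entrywise conjugation; an off-diagonal potential with `Q₁₂ = ε Q₂₁` is `Q₁₂ • J`,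
so `S (Q * μ̄) = Q * (S μ)‾`. Hence `S ∘ μ` solves the same Lippmann–Schwinger equation, and
`μ - S ∘ μ` is an `L^q` solution of the homogeneous one, which vanishes as `k` is not exceptional.
The fixed points of `S` are the matrices with `M₁₁ = M₂₂` and `M₁₂ = ε M₂₁`.

The integrals converge by Hölder's inequality: on the support of `Q` one has `Q μ̄ ∈ L^s` with
`1/s = 1/p + 1/q < 1/2`, while `|z - z'|⁻¹` lies in `L^r` on compact sets for every `r < 2`. -/

open scoped ENNReal Matrix

lemma locallyIntegrable_norm_inv_sub_rpow (z : ℂ) {t : ℝ} (ht : t < 2) :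
    LocallyIntegrable (fun x : ℂ => ‖(z - x)⁻¹‖ ^ t) volume := by
  have h0 : LocallyIntegrable (fun y : ℂ => ‖y⁻¹‖ ^ t) volume := by
    refine locallyIntegrable_of_norm_le_rpow (C := 1) (α := t) (by simp)
      (by simpa using ht) (Eventually.of_forall fun y => le_of_eq ?_)
      (measurable_inv.norm.pow_const t).aestronglyMeasurable
    rw [norm_inv, Real.inv_rpow (norm_nonneg _), ← Real.rpow_neg (norm_nonneg _), one_mul,
      Real.norm_of_nonneg (by positivity)]
  rw [← Measure.map_sub_left_eq_self volume z] at h0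
  exact (locallyIntegrable_map_homeomorph (Homeomorph.subLeft z)).1 h0

lemma memLp_inv_sub_restrict {K : Set ℂ} (hK : IsCompact K) (z : ℂ) {r : ℝ≥0∞} (hr : r < 2) :
    MemLp (fun x : ℂ => (z - x)⁻¹) r (volume.restrict K) := by
  have hmeas : AEStronglyMeasurable (fun x : ℂ => (z - x)⁻¹) (volume.restrict K) :=
    (measurable_const.sub measurable_id).inv.aestronglyMeasurable
  rcases eq_or_ne r 0 with rfl | hr0
  · exact memLp_zero_iff_aestronglyMeasurable.2 hmeas
  have hrtop : r ≠ ⊤ := (hr.trans ENNReal.ofNat_lt_top).ne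
  rw [← integrable_norm_rpow_iff hmeas hr0 hrtop]
  refine (locallyIntegrable_norm_inv_sub_rpow z ?_).integrableOn_isCompact hK
  simpa using ENNReal.toReal_strict_mono ENNReal.ofNat_ne_top hr

lemma integrableOn_inv_sub_smul {E : Type*} [NormedAddCommGroup E] [NormedSpace ℂ E]
    {K : Set ℂ} (hK : IsCompact K) (z : ℂ) {s : ℝ≥0∞} (hs : 2 < s) {f : ℂ → E}
    (hf : MemLp f s (volume.restrict K)) :
    IntegrableOn (fun x => (z - x)⁻¹ • f x) K := by
  have hs1 : s⁻¹ ≤ 1 := ENNReal.inv_le_one.2 (one_le_two.trans hs.le)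
  -- the Hölder conjugate of `s` stays below `2`, the critical exponent of `|x|⁻¹` in the plane
  have : ENNReal.HolderTriple (1 - s⁻¹)⁻¹ s 1 :=
    ⟨by rw [inv_inv, inv_one, tsub_add_cancel_of_le hs1]⟩
  have hr : (1 - s⁻¹)⁻¹ < 2 := by
    rw [ENNReal.inv_lt_iff_inv_lt, lt_tsub_iff_right, add_comm]
    calc s⁻¹ + 2⁻¹ < 2⁻¹ + 2⁻¹ :=
          ENNReal.add_lt_add_right (by simp) (ENNReal.inv_lt_inv.2 hs)
      _ = 1 := ENNReal.inv_two_add_inv_two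
  exact memLp_one_iff_integrable.1 (hf.smul (memLp_inv_sub_restrict hK z hr))

def lsKernel (k z z' : ℂ) : ℂ :=
  ((Real.pi : ℂ) * (z - z'))⁻¹ * Complex.exp (-(((Complex.I * (starRingEnd ℂ) k * z').re : ℝ) : ℂ))

lemma integrable_lsKernel_smul {E : Type*} [NormedAddCommGroup E] [NormedSpace ℂ E]
    (k z : ℂ) {K : Set ℂ} (hK : IsCompact K) {s : ℝ≥0∞} (hs : 2 < s) {f : ℂ → E}
    (hf : MemLp f s (volume.restrict K)) (hfK : ∀ x ∉ K, f x = 0) :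
    Integrable (fun x => lsKernel k z x • f x) := by
  set e : ℂ → ℂ := fun x =>
    (Real.pi : ℂ)⁻¹ * Complex.exp (-(((Complex.I * (starRingEnd ℂ) k * x).re : ℝ) : ℂ))
  have he : Continuous e := by fun_prop
  obtain ⟨C, hC⟩ := hK.exists_bound_of_continuousOn he.continuousOn
  have hOn : IntegrableOn (fun x => lsKernel k z x • f x) K := by
    have h : IntegrableOn (fun x => e x • ((z - x)⁻¹ • f x)) K :=
      (integrableOn_inv_sub_smul hK z hs hf).bdd_smul C he.aestronglyMeasurable
        ((ae_restrict_iff' hK.measurableSet).2 (Eventually.of_forall hC))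
    refine h.congr_fun (fun x _ => ?_) hK.measurableSet
    simp only [smul_smul, lsKernel, e, mul_inv]
    ring_nf
  exact hOn.integrable_of_forall_notMem_eq_zero fun x hx => by simp [hfK x hx]

lemma matConj_mul (M N : M2) : matConj (M * N) = matConj M * matConj N :=
  Matrix.map_mul (f := starRingEnd ℂ)

lemma matConj_sub (M N : M2) : matConj (M - N) = matConj M - matConj N :=
  Matrix.map_sub _ (map_sub _) M N

def mulMatConjCLM (J : M2) : M2 →L[ℝ] M2 :=
  LinearMap.toContinuousLinearMap
    { toFun := fun M => J * matConj M
      map_add' := fun M N => by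
        rw [← mul_add]; congr 1; ext i j; simp [matConj]
      map_smul' := fun r M => by
        rw [RingHom.id_apply, ← Matrix.mul_smul]; congr 1; ext i j; simp [matConj] }

def symJ (ε : ℂ) : M2 := !![0, 1; ε, 0]

def symConj (ε : ℂ) : M2 →L[ℂ] M2 :=
  LinearMap.toContinuousLinearMap
    (LinearMap.mulLeft ℂ (symJ ε) ∘ₗ LinearMap.mulRight ℂ (symJ ε)ᵀ)

section SymConj

variable {ε : ℂ}

lemma symConj_apply (M : M2) : symConj ε M = symJ ε * (M * (symJ ε)ᵀ) := rfl

lemma entries_eq_of_symConj_eq_self {M : M2} (h : symConj ε M = M) :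
    M 0 0 = M 1 1 ∧ M 0 1 = ε * M 1 0 := by
  have h00 : symConj ε M 0 0 = M 1 1 := by
    simp [symConj_apply, symJ, Matrix.mul_apply, Fin.sum_univ_two]
  have h01 : symConj ε M 0 1 = ε * M 1 0 := by
    simp [symConj_apply, symJ, Matrix.mul_apply, Fin.sum_univ_two, mul_comm]
  rw [h] at h00 h01
  exact ⟨h00, h01⟩

lemma symConj_one (hε : ε * ε = 1) : symConj ε 1 = 1 := by
  ext i j
  fin_cases i <;> fin_cases j <;>
    simp [symConj_apply, symJ, Matrix.mul_apply, Fin.sum_univ_two, hε]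

lemma matConj_symJ (hε : (starRingEnd ℂ) ε = ε) : matConj (symJ ε) = symJ ε := by
  ext i j
  fin_cases i <;> fin_cases j <;> simp [matConj, symJ, hε]

lemma matConj_transpose (M : M2) : matConj Mᵀ = (matConj M)ᵀ := rfl

lemma eq_smul_symJ (hε : ε * ε = 1) {Q : M2} (hd : Q 0 0 = 0 ∧ Q 1 1 = 0)
    (hs : Q 0 1 = ε * Q 1 0) : Q = Q 0 1 • symJ ε := by
  have h10 : Q 1 0 = ε * Q 0 1 := by rw [hs, ← mul_assoc, hε, one_mul]
  ext i j
  fin_cases i <;> fin_cases j <;> simp [symJ, hd.1, hd.2, h10, mul_comm]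

lemma symConj_smul_symJ_mul_matConj (hε : (starRingEnd ℂ) ε = ε) (c : ℂ) (M : M2) :
    symConj ε (c • symJ ε * matConj M) = c • symJ ε * matConj (symConj ε M) := by
  simp only [symConj_apply, matConj_mul, matConj_transpose, matConj_symJ hε, Matrix.smul_mul,
    Matrix.mul_smul, Matrix.mul_assoc]

end SymConj

def lsOp (Q : ℂ → M2) (k : ℂ) (μ : ℂ → M2) (z : ℂ) : M2 :=
  ∫ z', lsKernel k z z' • (Q z' * matConj (μ z'))

section LippmannSchwinger

/- `Matrix.normedAddCommGroup` is only a local instance, so the product topology of `M2` is not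
reducibly its norm topology and instance search cannot see that the norm is continuous. -/
local instance : ContinuousENorm M2 := SeminormedAddGroup.toContinuousENorm
local instance : ENormedAddCommMonoid M2 := NormedAddCommGroup.toENormedAddCommMonoid

variable {Q : ℂ → M2} {k : ℂ}

lemma integrable_lsKernel_smul_mul_matConj {c : ℂ → ℂ} {J : M2} (hQ : ∀ x, Q x = c x • J)
    (hQc : HasCompactSupport Q) {p q : ℝ≥0∞} (hpq : 2 < (p⁻¹ + q⁻¹)⁻¹) (hc : MemLp c p)
    {μ : ℂ → M2} (hμ : MemLp (fun x => μ x - 1) q) (z : ℂ) :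
    Integrable (fun x => lsKernel k z x • (Q x * matConj (μ x))) := by
  set K := tsupport Q
  have hK : IsCompact K := hQc
  have : IsFiniteMeasure (volume.restrict K) := isFiniteMeasure_restrict.2 hK.measure_ne_top
  have : ENNReal.HolderTriple p q (p⁻¹ + q⁻¹)⁻¹ := .of p q
  have hμK : MemLp μ q (volume.restrict K) := by
    have h := (hμ.restrict K).add (memLp_const (1 : M2))
    rwa [show ((fun x => μ x - 1) + fun _ => 1) = μ from funext fun x => sub_add_cancel _ _] at h
  have hf : MemLp (fun x => Q x * matConj (μ x)) (p⁻¹ + q⁻¹)⁻¹ (volume.restrict K) := by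
    have h := ((mulMatConjCLM J).comp_memLp' hμK).smul (r := (p⁻¹ + q⁻¹)⁻¹) (hc.restrict K)
    refine h.ae_eq (Eventually.of_forall fun x => ?_)
    simp only [Pi.smul_apply', Function.comp_apply, hQ x, Matrix.smul_mul]
    rfl
  refine integrable_lsKernel_smul k z hK hpq hf fun x hx => ?_
  rw [image_eq_zero_of_notMem_tsupport hx, zero_mul]

lemma lsOp_sub {μ ν : ℂ → M2} {z : ℂ}
    (hμ : Integrable (fun x => lsKernel k z x • (Q x * matConj (μ x))))
    (hν : Integrable (fun x => lsKernel k z x • (Q x * matConj (ν x)))) :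
    lsOp Q k (fun x => μ x - ν x) z = lsOp Q k μ z - lsOp Q k ν z := by
  rw [lsOp, lsOp, lsOp, ← integral_sub hμ hν]
  simp only [matConj_sub, mul_sub, smul_sub]

lemma eq_of_not_exceptional (hk : ¬ Exceptional Q k) {q : ℝ} (hq : 2 < q) {μ ν : ℂ → M2}
    (hμmem : MemLp (fun z => μ z - 1) (ENNReal.ofReal q))
    (hνmem : MemLp (fun z => ν z - 1) (ENNReal.ofReal q))
    (hμ : ∀ z, μ z = 1 + lsOp Q k μ z) (hν : ∀ z, ν z = 1 + lsOp Q k ν z)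
    (hμint : ∀ z, Integrable (fun x => lsKernel k z x • (Q x * matConj (μ x))))
    (hνint : ∀ z, Integrable (fun x => lsKernel k z x • (Q x * matConj (ν x)))) :
    μ = ν := by
  by_contra hne
  refine hk ⟨fun z => μ z - ν z, fun h => hne (funext fun z => sub_eq_zero.1 (congrFun h z)),
    ⟨q, hq, ?_⟩, fun z => ?_⟩
  · have h := hμmem.sub hνmem
    rwa [show ((fun z => μ z - 1) - fun z => ν z - 1) = fun z => μ z - ν z from
      funext fun z => sub_sub_sub_cancel_right _ _ _] at h
  show μ z - ν z = lsOp Q k (fun z => μ z - ν z) z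
  rw [lsOp_sub (hμint z) (hνint z), hμ z, hν z]
  abel

lemma lsOp_comp (S : M2 →L[ℂ] M2) (hS : ∀ x M, S (Q x * matConj M) = Q x * matConj (S M))
    {μ : ℂ → M2} {z : ℂ} (hint : Integrable (fun x => lsKernel k z x • (Q x * matConj (μ x)))) :
    S (lsOp Q k μ z) = lsOp Q k (fun x => S (μ x)) z := by
  calc S (lsOp Q k μ z) = ∫ x, S (lsKernel k z x • (Q x * matConj (μ x))) :=
        (S.integral_comp_comm hint).symm
    _ = lsOp Q k (fun x => S (μ x)) z := by simp only [map_smul, hS]; rfl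

lemma memLp_clm_comp_sub_one (S : M2 →L[ℂ] M2) (hS : S 1 = 1) {μ : ℂ → M2} {q : ℝ≥0∞}
    (hμ : MemLp (fun z => μ z - 1) q) : MemLp (fun z => S (μ z) - 1) q := by
  refine (S.comp_memLp' hμ).ae_eq (Eventually.of_forall fun z => ?_)
  exact (map_sub S (μ z) 1).trans (by rw [hS])

lemma eq_clm_comp_of_not_exceptional (hk : ¬ Exceptional Q k) {q : ℝ} (hq : 2 < q)
    (S : M2 →L[ℂ] M2) (hS1 : S 1 = 1)
    (hS : ∀ x M, S (Q x * matConj M) = Q x * matConj (S M))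
    (hint : ∀ φ : ℂ → M2, MemLp (fun z => φ z - 1) (ENNReal.ofReal q) →
      ∀ z, Integrable (fun x => lsKernel k z x • (Q x * matConj (φ x))))
    {μ : ℂ → M2} (hμmem : MemLp (fun z => μ z - 1) (ENNReal.ofReal q))
    (hμ : ∀ z, μ z = 1 + lsOp Q k μ z) :
    ∀ z, μ z = S (μ z) := by
  have hνmem := memLp_clm_comp_sub_one S hS1 hμmem
  have hν : ∀ z, S (μ z) = 1 + lsOp Q k (fun x => S (μ x)) z := fun z => by
    rw [← lsOp_comp S hS (hint μ hμmem z), ← hS1, ← map_add, ← hμ z]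
  exact congrFun (eq_of_not_exceptional hk hq hμmem hνmem hμ hν (hint μ hμmem) (hint _ hνmem))

end LippmannSchwinger

lemma inv_add_inv_lt_inv_two {p q : ℝ} (hp : 2 < p) (hq : 2 * p / (p - 2) < q) :
    p⁻¹ + q⁻¹ < 2⁻¹ := by
  have hp2 : 0 < p - 2 := by linarith
  have hq' : q⁻¹ < (p - 2) / (2 * p) := by
    simpa using inv_strictAnti₀ (by positivity) hq
  have : p⁻¹ + (p - 2) / (2 * p) = 2⁻¹ := by field_simp; ring
  linarith

lemma two_lt_of_two_mul_div_sub_lt {p q : ℝ} (hp : 2 < p) (hq : 2 * p / (p - 2) < q) :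
    2 < q := by
  refine lt_trans ?_ hq
  rw [lt_div_iff₀ (by linarith)]
  linarith

lemma two_lt_inv_add_inv_ofReal {p q : ℝ} (hp : 2 < p) (hq : 2 * p / (p - 2) < q) :
    2 < ((ENNReal.ofReal p)⁻¹ + (ENNReal.ofReal q)⁻¹)⁻¹ := by
  have hp0 : 0 < p := by linarith
  have hq0 : 0 < q := by linarith [two_lt_of_two_mul_div_sub_lt hp hq]
  rw [← ENNReal.ofReal_inv_of_pos hp0, ← ENNReal.ofReal_inv_of_pos hq0,
    ← ENNReal.ofReal_add (by positivity) (by positivity), ENNReal.lt_inv_iff_lt_inv,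
    ← ENNReal.ofReal_ofNat 2, ← ENNReal.ofReal_inv_of_pos two_pos,
    ENNReal.ofReal_lt_ofReal_iff (by norm_num)]
  exact inv_add_inv_lt_inv_two hp hq

/-- proof of Lemma `0312A`: for an off-diagonal potential `Q` with
`Q₁₂ = ±Q₂₁ ∈ L^p_comp(ℝ²)`, `p > 2`, and a non-exceptional `k`, the unique solution
`μ` of `μ = I + (1/π)∫ (e^{−Re(i k̄ z')}/(z−z')) Q μ̄` with `μ − I ∈ L^q`,
`q > 2p/(p−2)`, satisfies `μ₁₁ = μ₂₂` and `μ₁₂ = ±μ₂₁`. -/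
theorem statement9 (ε : ℂ) (hε : ε = 1 ∨ ε = -1) (p : ℝ) (hp : 2 < p)
    (Q : ℂ → M2) (hQd : ∀ z : ℂ, Q z 0 0 = 0 ∧ Q z 1 1 = 0)
    (hQs : ∀ z : ℂ, Q z 0 1 = ε * Q z 1 0)
    (hQp : MemLp (fun z => Q z 0 1) (ENNReal.ofReal p) (volume : Measure ℂ))
    (hQc : HasCompactSupport Q)
    (k : ℂ) (hk : ¬ Exceptional Q k)
    (q : ℝ) (hq : 2 * p / (p - 2) < q)
    (μ : ℂ → M2)
    (hμmem : MemLp (fun z => μ z - 1) (ENNReal.ofReal q) (volume : Measure ℂ))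
    (hμ : ∀ z : ℂ, μ z = 1 + ∫ z' : ℂ,
      (((Real.pi : ℂ) * (z - z'))⁻¹ *
        Complex.exp (-(((Complex.I * (starRingEnd ℂ) k * z').re : ℝ) : ℂ))) •
        (Q z' * matConj (μ z'))) :
    ∀ z : ℂ, μ z 0 0 = μ z 1 1 ∧ μ z 0 1 = ε * μ z 1 0 := by
  have hεε : ε * ε = 1 := by rcases hε with rfl | rfl <;> norm_num
  have hεr : (starRingEnd ℂ) ε = ε := by rcases hε with rfl | rfl <;> simp
  have hQJ : ∀ z, Q z = Q z 0 1 • symJ ε := fun z => eq_smul_symJ hεε (hQd z) (hQs z)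
  have hS : ∀ z M, symConj ε (Q z * matConj M) = Q z * matConj (symConj ε M) := fun z M => by
    rw [hQJ z]; exact symConj_smul_symJ_mul_matConj hεr _ M
  have hμS := eq_clm_comp_of_not_exceptional hk (two_lt_of_two_mul_div_sub_lt hp hq)
    (symConj ε) (symConj_one hεε) hS
    (fun φ hφ => integrable_lsKernel_smul_mul_matConj hQJ hQc (two_lt_inv_add_inv_ofReal hp hq)
      hQp hφ) hμmem hμ
  exact fun z => entries_eq_of_symConj_eq_self (hμS z).symm
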